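/- arXiv:1802.05535 — 4 statements merged into one kernel-verified Lean document; each statement's English description precedes it below -/
import Mathlib

section
/- Let x : ℕ → (ℝ → ℝ) satisfy the recursive linear ODEs x_j'(ρ) = x_{j-1}(ρ) - x_j(ρ) for all j > i, where x_i : ℝ → ℝ is a given continuous function. Then for each j > i, x_j(ρ) = e^{-ρ}·Σ_{k=i+1}^{j} (ρ^{j-k}/(j-k)!)·x_k(0) + (1/(j-(i+1))!)·∫_0^ρ x_i(ρ-s)·s^{j-(i+1)}·e^{-s} ds. -/
/-
For `y j ρ = e^ρ x j ρ` the system becomes `y (i+1)' = e^ρ x i` and `y (j+1)' = y j`,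
so `y j` is a `(j - i)`-fold antiderivative of `e^ρ x i`. The formula is then
Taylor's formula with integral remainder for `y j` at `0`, proved by repeated integration by parts,
followed by the substitution `s = ρ - u` in the remainder.
-/

open Finset intervalIntegral Nat Set MeasureTheory
open scoped Interval

section TaylorIntegral

variable {E : Type*} [NormedAddCommGroup E] [NormedSpace ℝ E] [CompleteSpace E]

theorem hasDerivAt_neg_sub_pow_div_factorial (b t : ℝ) (n : ℕ) :
    HasDerivAt (fun s => -((b - s) ^ (n + 1) / (n + 1)!)) ((b - t) ^ n / n !) t := by
  refine ((((hasDerivAt_id' t).const_sub b).pow (n + 1)).div_const ((n + 1)! : ℝ)).neg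
    |>.congr_deriv ?_
  rw [factorial_succ]
  push_cast
  field_simp

theorem inv_factorial_smul_integral_sub_pow_smul {v g : ℝ → E} {a b : ℝ}
    (hv : ∀ t ∈ [[a, b]], HasDerivAt v (g t) t) (hg : IntervalIntegrable g volume a b)
    (n : ℕ) :
    (n ! : ℝ)⁻¹ • ∫ t in a..b, (b - t) ^ n • v t =
      ((b - a) ^ (n + 1) / (n + 1)!) • v a +
        ((n + 1)! : ℝ)⁻¹ • ∫ t in a..b, (b - t) ^ (n + 1) • g t := by
  have hparts := integral_smul_deriv_eq_deriv_smul
    (fun t _ => hasDerivAt_neg_sub_pow_div_factorial b t n) hv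
    ((by fun_prop : Continuous fun t => (b - t) ^ n / n !).intervalIntegrable a b) hg
  simp only [sub_self, zero_pow (succ_ne_zero n), neg_smul, intervalIntegral.integral_neg,
    div_eq_inv_mul, mul_smul, intervalIntegral.integral_smul] at hparts
  rw [div_eq_inv_mul, mul_smul]
  linear_combination (norm := module) hparts

theorem eq_sum_add_integral_of_hasDerivAt_succ {y : ℕ → ℝ → E} {g : ℝ → E} {a b : ℝ}
    (hy₀ : ∀ t ∈ [[a, b]], HasDerivAt (y 0) (g t) t)
    (hy : ∀ k, ∀ t ∈ [[a, b]], HasDerivAt (y (k + 1)) (y k t) t)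
    (hg : IntervalIntegrable g volume a b) (n : ℕ) :
    y n b = ∑ k ∈ range (n + 1), ((b - a) ^ (n - k) / (n - k)!) • y k a
      + (n ! : ℝ)⁻¹ • ∫ u in a..b, (b - u) ^ n • g u := by
  induction n generalizing y g with
  | zero =>
    simp [integral_eq_sub_of_hasDerivAt hy₀ hg]
  | succ n ih =>
    have hy₀_int : IntervalIntegrable (y 0) volume a b :=
      (HasDerivAt.continuousOn hy₀).intervalIntegrable
    rw [ih (y := fun k => y (k + 1)) (hy 0) (fun k => hy (k + 1)) hy₀_int,
      sum_range_succ' _ (n + 1), add_assoc, inv_factorial_smul_integral_sub_pow_smul hy₀ hg]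
    simp

end TaylorIntegral

theorem HasDerivAt.exp_mul_of_hasDerivAt_sub {f g : ℝ → ℝ} {t : ℝ}
    (hf : HasDerivAt f (g t - f t) t) :
    HasDerivAt (fun s => Real.exp s * f s) (Real.exp t * g t) t :=
  ((Real.hasDerivAt_exp t).mul hf).congr_deriv (by ring)

theorem integral_comp_sub_mul_pow_mul_exp_neg (f : ℝ → ℝ) (ρ : ℝ) (n : ℕ) :
    ∫ s in (0 : ℝ)..ρ, f (ρ - s) * s ^ n * Real.exp (-s) =
      Real.exp (-ρ) * ∫ u in (0 : ℝ)..ρ, (ρ - u) ^ n * (Real.exp u * f u) := by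
  have hsubst := integral_comp_sub_left (a := 0) (b := ρ)
    (fun u => Real.exp (-ρ) * ((ρ - u) ^ n * (Real.exp u * f u))) ρ
  rw [sub_self, sub_zero] at hsubst
  rw [← intervalIntegral.integral_const_mul, ← hsubst]
  refine integral_congr fun s _ => ?_
  have hexp : Real.exp (-s) = Real.exp (-ρ) * Real.exp (ρ - s) := by
    rw [← Real.exp_add]; ring_nf
  simp only [sub_sub_cancel, hexp]
  ring

theorem stmt_3_general (i : ℕ) (x : ℕ → ℝ → ℝ)
    (hcont : ContinuousOn (x i) (Set.Ici 0))
    (hode : ∀ j, i < j → ∀ ρ : ℝ, HasDerivAt (x j) (x (j - 1) ρ - x j ρ) ρ) :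
    ∀ j, i < j → ∀ ρ : ℝ, 0 ≤ ρ →
      x j ρ = Real.exp (-ρ) *
          (∑ k ∈ Finset.Icc (i + 1) j, ρ ^ (j - k) / (Nat.factorial (j - k)) * x k 0)
        + (1 / (Nat.factorial (j - (i + 1)))) *
          ∫ s in (0 : ℝ)..ρ, x i (ρ - s) * s ^ (j - (i + 1)) * Real.exp (-s) := by
  intro j hj ρ hρ
  obtain ⟨n, rfl⟩ : ∃ n, j = i + 1 + n := ⟨j - (i + 1), by omega⟩
  have hint : IntervalIntegrable (fun t => Real.exp t * x i t) volume 0 ρ :=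
    (Real.continuous_exp.continuousOn.mul hcont).mono
      (by simp [uIcc_of_le hρ, Set.Icc_subset_Ici_self]) |>.intervalIntegrable
  have htaylor := eq_sum_add_integral_of_hasDerivAt_succ (a := 0) (b := ρ)
    (y := fun k t => Real.exp t * x (i + 1 + k) t) (g := fun t => Real.exp t * x i t)
    (fun t _ => (hode (i + 1 + 0) (by omega) t).exp_mul_of_hasDerivAt_sub)
    (fun k t _ => (hode (i + 1 + (k + 1)) (by omega) t).exp_mul_of_hasDerivAt_sub) hint n
  have hsum : ∑ k ∈ Finset.Icc (i + 1) (i + 1 + n),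
      ρ ^ (i + 1 + n - k) / ((i + 1 + n - k)! : ℝ) * x k 0 =
      ∑ k ∈ range (n + 1), ρ ^ (n - k) / ((n - k)! : ℝ) * x (i + 1 + k) 0 := by
    rw [← Finset.Ico_add_one_right_eq_Icc, sum_Ico_eq_sum_range,
      add_assoc (i + 1) n 1, Nat.add_sub_cancel_left]
    simp only [Nat.add_sub_add_left]
  have hunscale : x (i + 1 + n) ρ = Real.exp (-ρ) * (Real.exp ρ * x (i + 1 + n) ρ) := by
    rw [← mul_assoc, ← Real.exp_add, neg_add_cancel, Real.exp_zero, one_mul]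
  simp only [smul_eq_mul, sub_zero, Real.exp_zero, one_mul] at htaylor
  rw [hsum, integral_comp_sub_mul_pow_mul_exp_neg, Nat.add_sub_cancel_left, hunscale, htaylor]
  ring

/-- Variation-of-parameters solution of the recursive linear ODEs
`x_j' = x_{j-1} - x_j` for `j > i`. -/
theorem stmt_3 (i : ℕ) (hi : 1 ≤ i) (x : ℕ → ℝ → ℝ)
    (hcont : ContinuousOn (x i) (Set.Ici 0))
    (hode : ∀ j, i < j → ∀ ρ : ℝ, HasDerivAt (x j) (x (j - 1) ρ - x j ρ) ρ) :
    ∀ j, i < j → ∀ ρ : ℝ, 0 ≤ ρ →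
      x j ρ = Real.exp (-ρ) *
          (∑ k ∈ Finset.Icc (i + 1) j, ρ ^ (j - k) / (Nat.factorial (j - k)) * x k 0)
        + (1 / (Nat.factorial (j - (i + 1)))) *
          ∫ s in (0 : ℝ)..ρ, x i (ρ - s) * s ^ (j - (i + 1)) * Real.exp (-s) :=
  stmt_3_general i x hcont hode
end

section
/- Let c_i : [0,∞) → ℝ be continuous and bounded, and for j ≥ i+1 define c_j(ρ) = e^{-ρ}·Σ_{k=i+1}^{j} (ρ^{j-k}/(j-k)!)·c_k(0) + (1/(j-(i+1))!)·∫_0^ρ c_i(ρ-s)·s^{j-(i+1)}·e^{-s} ds, where Σ_{k=i+1}^∞ |c_k(0)| < ∞. Then for each ρ ≥ 0 the series Σ_{j=i+1}^∞ c_j(ρ) converges and equals Σ_{k=i+1}^∞ c_k(0) - c_i(0) + c_i(0) + ∫_0^ρ c_i(s) ds, i.e. Σ_{j=i+1}^∞ c_j(ρ) = Σ_{k=i+1}^∞ c_k(0) + ∫_0^ρ c_i(s) ds. -/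
/-!
Write `j = i + 1 + m`. The first part of `c_j(ρ)` is `e^{-ρ}` times the `m`-th coefficient of the
Cauchy product of `(c_{i+1+k}(0))_k` with the exponential series of `ρ`, so these parts sum
to `e^{-ρ} · e^ρ · ∑ₖ c_{i+1+k}(0)`. In the second part, summing `s^m/m!` over `m` under the
integral gives `e^s`, which cancels `e^{-s}`; dominated convergence applies because the integrands'
absolute values sum to the integrable `|c_i(ρ - s)| e^{|s| - s}`. What remains is
`∫_0^ρ c_i(ρ - s) ds = ∫_0^ρ c_i(s) ds`.
-/

open Finset intervalIntegral Nat

theorem Real.hasSum_pow_div_factorial (x : ℝ) : HasSum (fun n => x ^ n / n !) (Real.exp x) := by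
  rw [Real.exp_eq_exp_ℝ]
  exact NormedSpace.expSeries_div_hasSum_exp x

theorem hasSum_exp_neg_mul_sum_range_mul_pow_div_factorial {b : ℕ → ℝ}
    (hb : Summable fun k => |b k|) (ρ : ℝ) :
    HasSum (fun m => Real.exp (-ρ) * ∑ k ∈ range (m + 1), b k * (ρ ^ (m - k) / (m - k)!))
      (∑' k, b k) := by
  have hexp_norm : Summable fun n => ‖ρ ^ n / (n ! : ℝ)‖ :=
    (Real.summable_pow_div_factorial |ρ|).congr fun n => by simp
  have hprod :=
    (hasSum_sum_range_mul_of_summable_norm (f := b) hb hexp_norm).mul_left (Real.exp (-ρ))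
  rwa [(Real.hasSum_pow_div_factorial ρ).tsum_eq, mul_left_comm, ← Real.exp_add,
    neg_add_cancel, Real.exp_zero, mul_one] at hprod

theorem hasSum_integral_mul_pow_div_factorial_mul_exp_neg {f : ℝ → ℝ} (hf : Continuous f)
    (a b : ℝ) :
    HasSum (fun m => ∫ s in a..b, f s * (s ^ m / m !) * Real.exp (-s)) (∫ s in a..b, f s) := by
  have hbound_sum (t : ℝ) : HasSum (fun m => |f t| * (|t| ^ m / m !) * Real.exp (-t))
      (|f t| * Real.exp |t| * Real.exp (-t)) :=
    ((Real.hasSum_pow_div_factorial |t|).mul_left _).mul_right _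
  refine hasSum_integral_of_dominated_convergence
    (fun m t => |f t| * (|t| ^ m / m !) * Real.exp (-t))
    (fun m => (by fun_prop : Continuous _).aestronglyMeasurable)
    (fun m => .of_forall fun t _ => le_of_eq ?_)
    (.of_forall fun t _ => (hbound_sum t).summable) ?_
    (.of_forall fun t _ => ?_)
  · simp [abs_of_pos (Real.exp_pos _)]
  · simp_rw [fun t => (hbound_sum t).tsum_eq]
    exact (by fun_prop : Continuous _).intervalIntegrable _ _
  · simpa [mul_assoc, ← Real.exp_add] using
      ((Real.hasSum_pow_div_factorial t).mul_left (f t)).mul_right (Real.exp (-t))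

theorem sum_Icc_pow_div_factorial_mul (n m : ℕ) (ρ : ℝ) (b : ℕ → ℝ) :
    ∑ k ∈ Icc n (n + m), ρ ^ (n + m - k) / (n + m - k)! * b k
      = ∑ k ∈ range (m + 1), b (n + k) * (ρ ^ (m - k) / (m - k)!) := by
  rw [← Ico_add_one_right_eq_Icc, sum_Ico_eq_sum_range, show n + m + 1 - n = m + 1 by omega]
  refine sum_congr rfl fun k _ => ?_
  rw [show n + m - (n + k) = m - k by omega, mul_comm]

theorem stmt_4_general (i : ℕ) (ci : ℝ → ℝ) (a : ℕ → ℝ)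
    (hcont : Continuous ci)
    (hsum : Summable fun k => |a k|)
    (c : ℕ → ℝ → ℝ)
    (hc : ∀ j, i + 1 ≤ j → ∀ ρ : ℝ, c j ρ =
      Real.exp (-ρ) *
          (∑ k ∈ Finset.Icc (i + 1) j, ρ ^ (j - k) / (Nat.factorial (j - k)) * a k)
        + (1 / (Nat.factorial (j - (i + 1)))) *
          ∫ s in (0 : ℝ)..ρ, ci (ρ - s) * s ^ (j - (i + 1)) * Real.exp (-s)) :
    ∀ ρ : ℝ, 0 ≤ ρ →
      HasSum (fun m : ℕ => c (i + 1 + m) ρ)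
        ((∑' m : ℕ, a (i + 1 + m)) + ∫ s in (0 : ℝ)..ρ, ci s) := by
  intro ρ _
  have hshift : Summable fun k => |a (i + 1 + k)| :=
    hsum.comp_injective (add_right_injective (i + 1))
  have hinitial := hasSum_exp_neg_mul_sum_range_mul_pow_div_factorial hshift ρ
  have hforcing := hasSum_integral_mul_pow_div_factorial_mul_exp_neg
    (f := fun s => ci (ρ - s)) (by fun_prop) 0 ρ
  rw [integral_comp_sub_left ci ρ, sub_self, sub_zero] at hforcing
  convert hinitial.add hforcing using 1
  funext m
  rw [hc _ (by omega), sum_Icc_pow_div_factorial_mul, Nat.add_sub_cancel_left,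
    ← integral_const_mul]
  congr 1
  refine integral_congr fun s _ => ?_
  field_simp

/-- Summing the explicit solutions `c_j` (for `j > i`) of `c_j' = c_{j-1} - c_j`:
the series converges and equals `∑_{k>i} c_k(0) + ∫_0^ρ c_i(s) ds`. -/
theorem stmt_4 (i : ℕ) (hi : 1 ≤ i) (ci : ℝ → ℝ) (a : ℕ → ℝ)
    (hcont : Continuous ci) (hbdd : ∃ M : ℝ, ∀ s : ℝ, 0 ≤ s → |ci s| ≤ M)
    (hsum : Summable fun k => |a k|)
    (c : ℕ → ℝ → ℝ)
    (hc : ∀ j, i + 1 ≤ j → ∀ ρ : ℝ, c j ρ =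
      Real.exp (-ρ) *
          (∑ k ∈ Finset.Icc (i + 1) j, ρ ^ (j - k) / (Nat.factorial (j - k)) * a k)
        + (1 / (Nat.factorial (j - (i + 1)))) *
          ∫ s in (0 : ℝ)..ρ, ci (ρ - s) * s ^ (j - (i + 1)) * Real.exp (-s)) :
    ∀ ρ : ℝ, 0 ≤ ρ →
      HasSum (fun m : ℕ => c (i + 1 + m) ρ)
        ((∑' m : ℕ, a (i + 1 + m)) + ∫ s in (0 : ℝ)..ρ, ci s) :=
  stmt_4_general i ci a hcont hsum c hc
end

section
/- Solving the quasi-steady-state algebraic system c_1² - c_1c_2 - c_2 + c_3 = 0, c_1c_{j-1} - c_1c_j - c_j + c_{j+1} = 0 for 2 < j < i, and c_1c_{i-1} - c_1c_i - c_i = 0 for the unknowns c_2,...,c_i in terms of c_1 > 0 yields the unique solution c_j = (Σ_{k=1}^{i-j+1} c_1^{k+j-1}) / (Σ_{k=1}^{i} c_1^{k-1}) for j = 2, ..., i. -/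
open Finset

/-!
Write `x = c₁` and `S n = ∑_{k<n} xᵏ`. Setting `c_{i+1} := 0`, every equation of the system reads
`c_{j+1} - c_j = x (c_j - c_{j-1})` for `2 ≤ j ≤ i`, so the differences are geometric and
`c_j = c₁ + S (j-1) (c₂ - c₁)`. The boundary value `c_{i+1} = 0` then forces
`c₂ - c₁ = -x / S i` (here `S i > 0` because `x > 0`), and gives
`c_j = x (S i - S (j-1)) / S i`; the stated formula is this quotient, written out.
-/

section Recurrence

variable {R : Type*} [CommRing R] {x : R} {n : ℕ} {u : ℕ → R}

theorem sub_eq_pow_mul_of_sub_eq_mul_sub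
    (h : ∀ j, j + 2 ≤ n → u (j + 2) - u (j + 1) = x * (u (j + 1) - u j)) :
    ∀ j, j + 1 ≤ n → u (j + 1) - u j = x ^ j * (u 1 - u 0) := by
  intro j hj
  induction j with
  | zero => ring
  | succ j ih => rw [h j hj, ih (by omega), pow_succ']; ring

theorem sub_eq_geom_sum_mul_of_sub_eq_mul_sub
    (h : ∀ j, j + 2 ≤ n → u (j + 2) - u (j + 1) = x * (u (j + 1) - u j)) :
    ∀ j ≤ n, u j - u 0 = (∑ k ∈ range j, x ^ k) * (u 1 - u 0) := by
  intro j hj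
  induction j with
  | zero => simp
  | succ j ih =>
    calc u (j + 1) - u 0 = (u j - u 0) + (u (j + 1) - u j) := by ring
      _ = (∑ k ∈ range (j + 1), x ^ k) * (u 1 - u 0) := by
        rw [ih (by omega), sub_eq_pow_mul_of_sub_eq_mul_sub h j hj, sum_range_succ]; ring

end Recurrence

theorem sub_eq_mul_sub_iff_eq_geom_sum {K : Type*} [Field K] {x : K} {n : ℕ} {u : ℕ → K}
    (hS : ∑ k ∈ range n, x ^ k ≠ 0) (hn : u n = 0) :
    (∀ j, j + 2 ≤ n → u (j + 2) - u (j + 1) = x * (u (j + 1) - u j)) ↔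
      ∀ j ≤ n, u j = u 0 * (∑ k ∈ range n, x ^ k - ∑ k ∈ range j, x ^ k) /
        ∑ k ∈ range n, x ^ k := by
  constructor
  · intro h j hj
    have hj := sub_eq_geom_sum_mul_of_sub_eq_mul_sub h j hj
    have hn' := sub_eq_geom_sum_mul_of_sub_eq_mul_sub h n le_rfl
    rw [hn] at hn'
    field_simp
    linear_combination (∑ k ∈ range n, x ^ k) * hj - (∑ k ∈ range j, x ^ k) * hn'
  · intro h j hj
    rw [h j (by omega), h (j + 1) (by omega), h (j + 2) hj, sum_range_succ, sum_range_succ]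
    field_simp
    ring

theorem sum_Icc_one_eq_sum_range {M : Type*} [AddCommMonoid M] (f : ℕ → M) (n : ℕ) :
    ∑ k ∈ Icc 1 n, f k = ∑ k ∈ range n, f (k + 1) := by
  rw [← Ico_add_one_right_eq_Icc, sum_Ico_eq_sum_range, Nat.add_sub_cancel]
  simp only [add_comm]

theorem sum_Icc_pow_eq_mul_sub_geom_sum {R : Type*} [CommRing R] (x : R) {i j : ℕ} (hji : j < i) :
    ∑ k ∈ Icc 1 (i - (j + 1) + 1), x ^ (k + (j + 1) - 1) =
      x * (∑ k ∈ range i, x ^ k - ∑ k ∈ range j, x ^ k) := by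
  obtain ⟨l, rfl⟩ : ∃ l, i = j + l := ⟨i - j, by omega⟩
  rw [show j + l - (j + 1) + 1 = l by omega, sum_range_add, add_sub_cancel_left,
    sum_Icc_one_eq_sum_range, mul_sum]
  refine sum_congr rfl fun k _ => ?_
  rw [show k + 1 + (j + 1) - 1 = j + k + 1 by omega, pow_succ']

/-- The sequence `c₁, …, c_i, 0`, indexed from `0`: appending `c_{i+1} := 0` makes the last
equation of the system one more instance of the middle ones. -/
def padShift {R : Type*} [Zero R] (c : ℕ → R) (i : ℕ) : ℕ → R :=
  Function.update (fun k => c (k + 1)) i 0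

section PadShift

variable {R : Type*} [Zero R] {i : ℕ} {c : ℕ → R}

theorem padShift_of_lt {k : ℕ} (hk : k < i) : padShift c i k = c (k + 1) :=
  Function.update_of_ne hk.ne _ _

theorem padShift_self : padShift c i i = 0 :=
  Function.update_self _ _ _

end PadShift

theorem qssa_system_iff {R : Type*} [CommRing R] {i : ℕ} {c : ℕ → R} (hi : 2 ≤ i) :
    ((∀ j, 2 ≤ j → j < i → c 1 * c (j - 1) - c 1 * c j - c j + c (j + 1) = 0) ∧
      c 1 * c (i - 1) - c 1 * c i - c i = 0) ↔
    ∀ j, j + 2 ≤ i → padShift c i (j + 2) - padShift c i (j + 1) =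
      c 1 * (padShift c i (j + 1) - padShift c i j) := by
  have hlow : ∀ j, j + 2 ≤ i → padShift c i (j + 1) = c (j + 2) ∧ padShift c i j = c (j + 1) :=
    fun j hj => ⟨padShift_of_lt (by omega), padShift_of_lt (by omega)⟩
  obtain ⟨m, rfl⟩ : ∃ m, i = m + 2 := ⟨i - 2, by omega⟩
  constructor
  · rintro ⟨hmid, hlast⟩ j hj
    rw [(hlow j hj).1, (hlow j hj).2]
    rcases hj.lt_or_eq with hj | hj
    · have h := hmid (j + 2) (by omega) hj
      rw [Nat.add_succ_sub_one] at h
      rw [padShift_of_lt hj]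
      linear_combination h
    · obtain rfl : j = m := by omega
      rw [Nat.add_succ_sub_one] at hlast
      rw [padShift_self]
      linear_combination hlast
  · intro h
    refine ⟨fun j hj2 hji => ?_, ?_⟩
    · obtain ⟨j, rfl⟩ : ∃ l, j = l + 2 := ⟨j - 2, by omega⟩
      have h := h j hji.le
      rw [padShift_of_lt hji, (hlow j hji.le).1, (hlow j hji.le).2] at h
      rw [Nat.add_succ_sub_one]
      linear_combination h
    · have h := h m le_rfl
      rw [padShift_self, (hlow m le_rfl).1, (hlow m le_rfl).2] at h
      rw [Nat.add_succ_sub_one]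
      linear_combination h

/-- The quasi-steady-state linear system for `c_2, …, c_i` in terms of `c_1 > 0`
has the unique solution `c_j = (∑_{k=1}^{i-j+1} c_1^{k+j-1})/(∑_{k=1}^i c_1^{k-1})`. -/
theorem stmt_7 (i : ℕ) (hi : 2 ≤ i) (c : ℕ → ℝ) (hc1 : 0 < c 1) :
    ((∀ j, 2 ≤ j → j < i → c 1 * c (j - 1) - c 1 * c j - c j + c (j + 1) = 0) ∧
      c 1 * c (i - 1) - c 1 * c i - c i = 0)
    ↔ (∀ j ∈ Finset.Icc 2 i, c j =
        (∑ k ∈ Finset.Icc 1 (i - j + 1), (c 1) ^ (k + j - 1)) /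
        (∑ k ∈ Finset.Icc 1 i, (c 1) ^ (k - 1))) := by
  have hS : ∑ k ∈ range i, c 1 ^ k ≠ 0 := (geom_sum_pos hc1.le (by omega)).ne'
  rw [qssa_system_iff hi, sub_eq_mul_sub_iff_eq_geom_sum hS padShift_self,
    padShift_of_lt (by omega : 0 < i)]
  have hformula : ∀ j < i,
      (∑ k ∈ Icc 1 (i - (j + 1) + 1), c 1 ^ (k + (j + 1) - 1)) / (∑ k ∈ Icc 1 i, c 1 ^ (k - 1)) =
        c 1 * (∑ k ∈ range i, c 1 ^ k - ∑ k ∈ range j, c 1 ^ k) / ∑ k ∈ range i, c 1 ^ k := by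
    intro j hj
    rw [sum_Icc_pow_eq_mul_sub_geom_sum _ hj, sum_Icc_one_eq_sum_range]
    simp only [Nat.add_sub_cancel]
  constructor
  · intro h j hj
    obtain ⟨hj2, hji⟩ := mem_Icc.mp hj
    obtain ⟨j, rfl⟩ : ∃ l, j = l + 1 := ⟨j - 1, by omega⟩
    rw [hformula j (by omega), ← h j (by omega), padShift_of_lt (by omega)]
  · intro h j hj
    rcases hj.lt_or_eq with hj | rfl
    · rw [padShift_of_lt hj, zero_add]
      rcases Nat.eq_zero_or_pos j with rfl | _
      · rw [range_zero, sum_empty, sub_zero, mul_div_cancel_right₀ _ hS]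
      · rw [h (j + 1) (mem_Icc.mpr ⟨by omega, hj⟩), hformula j hj]
    · rw [padShift_self, sub_self, mul_zero, zero_div]
end

section
/- Let g_2, ..., g_i, g_w be formal power series in c_1 with zero constant and linear terms that satisfy the centre-manifold invariance equations: g_2'·(g_w - 2c_1²) = c_1² - c_1g_2 + c_1g_3 - g_2 + g_3; g_j'·(g_w - 2c_1²) = c_1g_{j-1} - c_1g_j - g_j + g_{j+1} for 2 < j < i; g_i'·(g_w - 2c_1²) = c_1g_{i-1} - c_1g_i - g_i. Then for each 2 ≤ j ≤ i, the lowest-order term of g_j is c_1^j, i.e. the coefficient of c_1^k in g_j vanishes for k < j and the coefficient of c_1^j equals 1. -/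
open PowerSeries

/-!
Compare coefficients of `c_1^k` in the invariance equations, by induction on `k`. Since
`g_w - 2c_1²` has order at least `2`, the left-hand side of the `j`-th equation only sees
coefficients of `g_j` below `c_1^k`, which vanish for `k ≤ j` by induction. What remains is
`coeff_k g_j = coeff_{k-1} g_{j-1} + coeff_k g_{j+1}`, a recursion in `j` which, started from
`g_{i+1} = 0` and fed with `coeff_{k-1} g_{j-1} = δ_{kj}`, gives `coeff_k g_j = δ_{kj}`.
-/

namespace PowerSeries

variable {R : Type*} [CommRing R]

theorem X_pow_pred_dvd_derivative {f : R⟦X⟧} {k : ℕ} (hf : X ^ k ∣ f) :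
    X ^ (k - 1) ∣ derivative R f := by
  rw [X_pow_dvd_iff] at hf ⊢
  intro m hm
  rw [coeff_derivative, hf (m + 1) (by omega), zero_mul]

theorem coeff_derivative_mul_eq_zero {f h : R⟦X⟧} {k : ℕ} (hf : X ^ k ∣ f) (hh : X ^ 2 ∣ h) :
    coeff k (derivative R f * h) = 0 := by
  have hdvd : X ^ (k + 1) ∣ derivative R f * h :=
    (pow_dvd_pow (X : R⟦X⟧) (by omega : k + 1 ≤ k - 1 + 2)).trans
      (pow_add (X : R⟦X⟧) (k - 1) 2 ▸ mul_dvd_mul (X_pow_pred_dvd_derivative hf) hh)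
  exact X_pow_dvd_iff.mp hdvd k (Nat.lt_succ_self k)

theorem coeff_eq_of_derivative_mul_eq {p q r h : R⟦X⟧} {k : ℕ} (hh : X ^ 2 ∣ h)
    (hq : X ^ k ∣ q) (he : derivative R q * h = X * p - X * q - q + r) :
    coeff k q = coeff k (X * p) + coeff k r := by
  have hXq : coeff k (X * q) = 0 :=
    X_pow_dvd_iff.mp (pow_succ' (X : R⟦X⟧) k ▸ mul_dvd_mul_left X hq) k (Nat.lt_succ_self k)
  have hk := congrArg (coeff k) he
  rw [coeff_derivative_mul_eq_zero hq hh, map_add, map_sub, map_sub, hXq] at hk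
  linear_combination hk

theorem coeff_X_mul_eq_of_forall_lt {p p' : R⟦X⟧} {k : ℕ}
    (hp : ∀ l < k, coeff l p = coeff l p') : coeff k (X * p) = coeff k (X * p') := by
  cases k with
  | zero => simp only [coeff_zero_X_mul]
  | succ l => rw [coeff_succ_X_mul, coeff_succ_X_mul, hp l (Nat.lt_succ_self l)]

theorem coeff_chain_eq_coeff_X_pow {f : ℕ → R⟦X⟧} {h : R⟦X⟧} {n : ℕ} (hh : X ^ 2 ∣ h)
    (hf1 : f 1 = X) (hfn : f (n + 1) = 0)
    (he : ∀ j, 2 ≤ j → j ≤ n →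
      derivative R (f j) * h = X * f (j - 1) - X * f j - f j + f (j + 1))
    (k : ℕ) : ∀ j, 1 ≤ j → j ≤ n → k ≤ j → coeff k (f j) = coeff k (X ^ j) := by
  induction k using Nat.strong_induction_on with
  | _ k ih =>
  have hrow : ∀ j, 2 ≤ j → j ≤ n → k ≤ j →
      coeff k (f j) = coeff k (X ^ j) + coeff k (f (j + 1)) := by
    intro j hj2 hjn hkj
    have hdvd : X ^ k ∣ f j := X_pow_dvd_iff.mpr fun l hl => by
      rw [ih l hl j (by omega) hjn (by omega), coeff_X_pow, if_neg (by omega)]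
    have hprev : coeff k (X * f (j - 1)) = coeff k (X ^ j) := by
      rw [← Nat.sub_add_cancel (by omega : 1 ≤ j), pow_succ', Nat.add_sub_cancel]
      exact coeff_X_mul_eq_of_forall_lt fun l hl => ih l hl (j - 1) (by omega) (by omega) (by omega)
    rw [coeff_eq_of_derivative_mul_eq hh hdvd (he j hj2 hjn), hprev]
  have hzero : ∀ j, max (k + 1) 2 ≤ j → j ≤ n + 1 → coeff k (f j) = 0 := by
    intro j hj hjn
    induction hjn using Nat.decreasingInduction with
    | self => rw [hfn, map_zero]
    | of_succ j hjn ih' =>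
      rw [hrow j (by omega) (by omega) (by omega), ih' (by omega), coeff_X_pow, if_neg (by omega),
        add_zero]
  intro j hj1 hjn hkj
  rcases hj1.eq_or_lt with rfl | hj2
  · rw [hf1, pow_one]
  · rw [hrow j hj2 hjn hkj, hzero (j + 1) (by omega) (by omega), add_zero]

end PowerSeries

theorem stmt_15_general (i : ℕ) (hi : 2 ≤ i)
    (g : ℕ → PowerSeries ℝ) (gw : PowerSeries ℝ)
    (hg1 : g 1 = PowerSeries.X)
    (hwlow : PowerSeries.coeff 0 gw = 0 ∧ PowerSeries.coeff 1 gw = 0)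
    (heq : ∀ j, 2 ≤ j → j < i →
      (derivative ℝ (g j)) * (gw - 2 * PowerSeries.X ^ 2)
        = PowerSeries.X * g (j - 1) - PowerSeries.X * g j - g j + g (j + 1))
    (heqi : (derivative ℝ (g i)) * (gw - 2 * PowerSeries.X ^ 2)
        = PowerSeries.X * g (i - 1) - PowerSeries.X * g i - g i) :
    ∀ j ∈ Finset.Icc 2 i,
      (∀ k < j, PowerSeries.coeff k (g j) = 0) ∧ PowerSeries.coeff j (g j) = 1 := by
  have hgw : X ^ 2 ∣ gw := X_pow_dvd_iff.mpr fun m hm => by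
    interval_cases m
    exacts [hwlow.1, hwlow.2]
  -- the convention `g_{i+1} = 0` makes the last equation an instance of the others
  set f := Function.update g (i + 1) 0
  have hf : ∀ j ≤ i, f j = g j := fun j hj => Function.update_of_ne (by omega) _ _
  have hfi : f (i + 1) = 0 := Function.update_self _ _ _
  have hf1 : f 1 = X := hf 1 (by omega) ▸ hg1
  have hchain := coeff_chain_eq_coeff_X_pow (dvd_sub hgw (dvd_mul_left _ _)) hf1 hfi
    fun j hj2 hji => by
      rw [hf j hji, hf (j - 1) (by omega)]
      rcases hji.lt_or_eq with hlt | rfl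
      · rw [hf (j + 1) hlt, heq j hj2 hlt]
      · rw [heqi, hfi, add_zero]
  intro j hj
  obtain ⟨hj2, hji⟩ := Finset.mem_Icc.mp hj
  have hcoeff : ∀ k ≤ j, coeff k (g j) = coeff k (X ^ j) := fun k hk =>
    hf j hji ▸ hchain k j (by omega) hji hk
  refine ⟨fun k hk => ?_, ?_⟩
  · rw [hcoeff k hk.le, coeff_X_pow, if_neg hk.ne]
  · rw [hcoeff j le_rfl, coeff_X_pow_self]

/-- For formal power series `g_2, …, g_i, g_w` (no constant or linear terms)
satisfying the centre-manifold invariance equations (with the convention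
`g_1 = X` and `g_{i+1} = 0`), the lowest-order term of `g_j` is `c_1^j`:
the coefficient of `c_1^k` vanishes for `k < j` and the coefficient of
`c_1^j` equals `1`. -/
theorem stmt_15 (i : ℕ) (hi : 2 ≤ i)
    (g : ℕ → PowerSeries ℝ) (gw : PowerSeries ℝ)
    (hg1 : g 1 = PowerSeries.X)
    (hlow : ∀ j ∈ Finset.Icc 2 i,
      PowerSeries.coeff 0 (g j) = 0 ∧ PowerSeries.coeff 1 (g j) = 0)
    (hwlow : PowerSeries.coeff 0 gw = 0 ∧ PowerSeries.coeff 1 gw = 0)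
    (heq : ∀ j, 2 ≤ j → j < i →
      (derivative ℝ (g j)) * (gw - 2 * PowerSeries.X ^ 2)
        = PowerSeries.X * g (j - 1) - PowerSeries.X * g j - g j + g (j + 1))
    (heqi : (derivative ℝ (g i)) * (gw - 2 * PowerSeries.X ^ 2)
        = PowerSeries.X * g (i - 1) - PowerSeries.X * g i - g i) :
    ∀ j ∈ Finset.Icc 2 i,
      (∀ k < j, PowerSeries.coeff k (g j) = 0) ∧ PowerSeries.coeff j (g j) = 1 :=
  stmt_15_general i hi g gw hg1 hwlow heq heqi
end
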